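/- arXiv:1907.03369 — 4 statements merged into one kernel-verified Lean document; each statement's English description precedes it below -/
import Mathlib

section
/- Let G be a finite abstract simplicial complex with connection matrix L, regarded as a matrix over the rationals. Then L is invertible, and the sum of all entries of the inverse matrix g = L^{-1} equals the Euler characteristic of G: ∑_{x,y∈G} g(x,y) = χ(G). -/
open Finset BigOperators

variable {α : Type*} [DecidableEq α]

/-- A finite abstract simplicial complex: a finite collection of nonempty finite
sets closed under taking nonempty subsets. -/
def IsComplex (G : Finset (Finset α)) : Prop :=
  (∀ x ∈ G, x.Nonempty) ∧ ∀ x ∈ G, ∀ y : Finset α, y.Nonempty → y ⊆ x → y ∈ G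

/-- ω(x) = (-1)^(|x|-1). -/
def omegaS (x : Finset α) : ℤ := (-1) ^ (x.card - 1)

/-- Euler characteristic χ(G) = ∑_{x∈G} ω(x). -/
def chi (G : Finset (Finset α)) : ℤ := ∑ x ∈ G, omegaS x

/-- The connection matrix over ℚ: L(x,y)=1 if x and y intersect, 0 otherwise. -/
def connL (G : Finset (Finset α)) : Matrix G G ℚ :=
  fun x y => if (x.1 ∩ y.1).Nonempty then 1 else 0

/-!
Let `F z x = [z ⊆ x]` on `G` and `D = diag ω`. Since `G` contains every nonempty subset of
`x ∩ y`, and the nonempty subsets of a nonempty set have signs `ω` summing to `1`, we get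
`L = Fᵀ D F` and `ω ᵥ* F = 1`. Ordering faces by cardinality makes `F` unitriangular and `D` is
a diagonal of signs, so `L` is invertible. If `F u = 1` then `L u = Fᵀ ω = 1`, so the entries of
`L⁻¹` sum to `∑ u = (ω ᵥ* F) ⬝ᵥ u = ω ⬝ᵥ F u = ∑ ω = χ(G)`.
-/

open Matrix

section CongruentDiagonal

variable {n R : Type*} [Fintype n] [DecidableEq n] [CommRing R]

theorem Matrix.sum_inv_apply_of_mulVec_eq_one {A : Matrix n n R} (hA : IsUnit A.det)
    {u : n → R} (hu : A *ᵥ u = 1) : ∑ i, ∑ j, A⁻¹ i j = ∑ i, u i := by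
  have hinv : A⁻¹ *ᵥ 1 = u := by
    rw [← hu, mulVec_mulVec, nonsing_inv_mul _ hA, one_mulVec]
  simp only [← hinv, mulVec, dotProduct, Pi.one_apply, mul_one]

theorem Matrix.isUnit_det_transpose_mul_diagonal_mul {F : Matrix n n R} (hF : IsUnit F.det)
    {d : n → R} (hd : ∀ i, IsUnit (d i)) : IsUnit (Fᵀ * diagonal d * F).det := by
  rw [det_mul, det_mul, det_transpose, det_diagonal]
  exact (hF.mul (IsUnit.prod_iff.mpr fun i _ => hd i)).mul hF

theorem Matrix.sum_inv_transpose_mul_diagonal_mul {F : Matrix n n R} (hF : IsUnit F.det)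
    {d : n → R} (hd : ∀ i, IsUnit (d i)) (hdF : d ᵥ* F = 1) :
    ∑ i, ∑ j, (Fᵀ * diagonal d * F)⁻¹ i j = ∑ i, d i := by
  set u := F⁻¹ *ᵥ 1
  have hFu : F *ᵥ u = 1 := by rw [mulVec_mulVec, mul_nonsing_inv _ hF, one_mulVec]
  have hLu : (Fᵀ * diagonal d * F) *ᵥ u = 1 := by
    have hd1 : diagonal d *ᵥ 1 = d := funext fun i => by simp [mulVec_diagonal]
    rw [← mulVec_mulVec, ← mulVec_mulVec, hFu, hd1, mulVec_transpose, hdF]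
  rw [sum_inv_apply_of_mulVec_eq_one (isUnit_det_transpose_mul_diagonal_mul hF hd) hLu,
    ← one_dotProduct, ← hdF, ← dotProduct_mulVec, hFu, dotProduct_one]

end CongruentDiagonal

def subsetMatrix (S : Finset (Finset α)) : Matrix S S ℚ :=
  fun z x => if z.1 ⊆ x.1 then 1 else 0

theorem det_subsetMatrix (S : Finset (Finset α)) : (subsetMatrix S).det = 1 := by
  have hT : (subsetMatrix S).BlockTriangular (fun x => x.1.card) := fun z x hlt => by
    simp only [subsetMatrix, ite_eq_right_iff]
    exact fun hzx => absurd (card_le_card hzx) (not_le.2 hlt)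
  have hblock : ∀ k, (subsetMatrix S).toSquareBlock (fun x => x.1.card) k = 1 := by
    intro k
    ext ⟨z, hz⟩ ⟨x, hx⟩
    have hsub : z.1 ⊆ x.1 ↔ z = x :=
      ⟨fun h => Subtype.ext (eq_of_subset_of_card_le h (hz.trans hx.symm).ge),
        fun h => h ▸ Subset.rfl⟩
    simp only [toSquareBlock_def, subsetMatrix, of_apply, one_apply, Subtype.mk.injEq, hsub]
  rw [hT.det]
  exact prod_eq_one fun k _ => by rw [hblock, det_one]

omit [DecidableEq α] in
theorem omegaS_of_nonempty {x : Finset α} (hx : x.Nonempty) : omegaS x = -(-1) ^ x.card := by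
  rw [omegaS, ← Nat.sub_add_cancel hx.card_pos, pow_succ, Nat.add_sub_cancel]
  ring

omit [DecidableEq α] in
theorem isUnit_omegaS (x : Finset α) : IsUnit (omegaS x) :=
  isUnit_neg_one.pow _

theorem sum_omegaS_powerset_erase_empty (w : Finset α) :
    ∑ z ∈ w.powerset.erase ∅, omegaS z = if w.Nonempty then 1 else 0 := by
  rcases w.eq_empty_or_nonempty with rfl | hw
  · simp
  have hodd : ∀ z ∈ w.powerset.erase ∅, omegaS z = -(-1) ^ z.card := fun z hz =>
    omegaS_of_nonempty (nonempty_iff_ne_empty.2 (ne_of_mem_erase hz))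
  rw [if_pos hw, sum_congr rfl hodd, sum_neg_distrib, sum_erase_eq_sub (empty_mem_powerset w),
    sum_powerset_neg_one_pow_card_of_nonempty hw]
  simp

theorem IsComplex.filter_subset_eq {G : Finset (Finset α)} (hG : IsComplex G) {x w : Finset α}
    (hx : x ∈ G) (hw : w ⊆ x) : {z ∈ G | z ⊆ w} = w.powerset.erase ∅ := by
  ext z
  simp only [mem_filter, mem_erase, mem_powerset, ← nonempty_iff_ne_empty]
  exact ⟨fun ⟨hzG, hzw⟩ => ⟨hG.1 z hzG, hzw⟩,
    fun ⟨hz, hzw⟩ => ⟨hG.2 x hx z hz (hzw.trans hw), hzw⟩⟩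

theorem IsComplex.sum_omegaS_subset {G : Finset (Finset α)} (hG : IsComplex G) {x w : Finset α}
    (hx : x ∈ G) (hw : w ⊆ x) :
    ∑ z : G, (if z.1 ⊆ w then (omegaS z.1 : ℚ) else 0) = if w.Nonempty then 1 else 0 := by
  rw [sum_coe_sort G (fun z => if z ⊆ w then (omegaS z : ℚ) else 0), ← sum_filter,
    hG.filter_subset_eq hx hw]
  exact_mod_cast sum_omegaS_powerset_erase_empty w

theorem IsComplex.connL_eq {G : Finset (Finset α)} (hG : IsComplex G) :
    connL G = (subsetMatrix G)ᵀ * diagonal (fun x => (omegaS x.1 : ℚ)) * subsetMatrix G := by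
  ext x y
  rw [mul_apply]
  simp only [mul_diagonal, transpose_apply, subsetMatrix, ite_mul, one_mul, zero_mul,
    mul_ite, mul_one, mul_zero, ← ite_and, ← subset_inter_iff]
  rw [hG.sum_omegaS_subset x.2 inter_subset_right, connL, inter_comm]

theorem IsComplex.omegaS_vecMul_subsetMatrix {G : Finset (Finset α)} (hG : IsComplex G) :
    (fun x : G => (omegaS x.1 : ℚ)) ᵥ* subsetMatrix G = 1 := by
  funext x
  simp only [vecMul, dotProduct, subsetMatrix, mul_ite, mul_one, mul_zero]
  rw [hG.sum_omegaS_subset x.2 Subset.rfl, if_pos (hG.1 x x.2), Pi.one_apply]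

/-- Energy theorem: the connection matrix is invertible over ℚ, and the sum of
all entries of its inverse equals the Euler characteristic of G. -/
theorem energy_theorem (G : Finset (Finset α)) (hG : IsComplex G) :
    IsUnit (connL G).det ∧
    ∑ x : G, ∑ y : G, (connL G)⁻¹ x y = (chi G : ℚ) := by
  have hF : IsUnit (subsetMatrix G).det := by rw [det_subsetMatrix]; exact isUnit_one
  have hω : ∀ x : G, IsUnit (omegaS x.1 : ℚ) := fun x =>
    (isUnit_omegaS x.1).map (Int.castRingHom ℚ)
  rw [hG.connL_eq]
  refine ⟨isUnit_det_transpose_mul_diagonal_mul hF hω, ?_⟩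
  rw [sum_inv_transpose_mul_diagonal_mul hF hω hG.omegaS_vecMul_subsetMatrix, chi, Int.cast_sum]
  exact sum_coe_sort G (fun x => (omegaS x : ℚ))
end

section
/- Let G be a finite abstract simplicial complex with connection matrix L, regarded as a matrix over the rationals, and let g = L^{-1}. Then for all x, y ∈ G, g(x,y) = ω(x)·ω(y)·χ(W⁺(x) ∩ W⁺(y)), where W⁺(x) ∩ W⁺(y) = { z ∈ G : x ⊆ z and y ⊆ z }. -/
open Finset BigOperators

variable {α : Type*} [DecidableEq α]

lemma powQ (S : Finset α) :
    (∑ m ∈ S.powerset, (-1 : ℚ) ^ m.card) = if S = ∅ then 1 else 0 := by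
  have h := @Finset.sum_powerset_neg_one_pow_card α _ S
  calc (∑ m ∈ S.powerset, (-1:ℚ)^m.card)
      = ((∑ m ∈ S.powerset, (-1:ℤ)^m.card : ℤ) : ℚ) := by push_cast; rfl
    _ = _ := by rw [h]; split <;> simp

lemma sum_nonempty_powerset (S : Finset α) :
    ∑ z ∈ S.powerset.filter (fun z => z.Nonempty), (-1 : ℚ) ^ (z.card - 1)
      = if S.Nonempty then 1 else 0 := by
  have split := Finset.sum_filter_add_sum_filter_not S.powerset (fun z => z.Nonempty)
      (fun z => (-1 : ℚ) ^ z.card)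
  have h2 : S.powerset.filter (fun z => ¬ z.Nonempty) = {∅} := by
    ext z; simp [Finset.not_nonempty_iff_eq_empty]
    rintro rfl; simp
  rw [h2, Finset.sum_singleton, powQ] at split
  have h3 : ∑ z ∈ S.powerset.filter (fun z => z.Nonempty), (-1 : ℚ) ^ (z.card - 1)
      = - ∑ z ∈ S.powerset.filter (fun z => z.Nonempty), (-1 : ℚ) ^ z.card := by
    rw [← Finset.sum_neg_distrib]
    refine Finset.sum_congr rfl fun z hz => ?_
    have hz' : 1 ≤ z.card := Finset.card_pos.2 (Finset.mem_filter.1 hz).2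
    have h4 : (-1:ℚ)^z.card = (-1)^(z.card-1) * (-1) := by
      rw [← pow_succ]; congr 1; omega
    rw [h4]; ring
  rw [h3]
  by_cases h : S = ∅
  · rw [if_pos h] at split; simp [h] at split ⊢; linarith
  · rw [if_neg h] at split
    rw [if_pos (Finset.nonempty_iff_ne_empty.2 h)]
    simp at split; linarith

lemma greenSumInner (w x : Finset α) (hw : w.Nonempty) :
    ∑ z ∈ w.powerset.filter (fun z => (x ∩ z).Nonempty), (-1 : ℚ) ^ (z.card - 1)
      = if w ⊆ x then 1 else 0 := by
  have split := Finset.sum_filter_add_sum_filter_not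
      (w.powerset.filter (fun z => z.Nonempty)) (fun z => (x ∩ z).Nonempty)
      (fun z => (-1 : ℚ) ^ (z.card - 1))
  have e1 : (w.powerset.filter (fun z => z.Nonempty)).filter (fun z => (x ∩ z).Nonempty)
      = w.powerset.filter (fun z => (x ∩ z).Nonempty) := by
    rw [Finset.filter_filter]
    refine Finset.filter_congr fun z hz => ?_
    constructor
    · rintro ⟨_, h⟩; exact h
    · intro h; exact ⟨h.mono (Finset.inter_subset_right), h⟩
  have e2 : (w.powerset.filter (fun z => z.Nonempty)).filter (fun z => ¬ (x ∩ z).Nonempty)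
      = (w \ x).powerset.filter (fun z => z.Nonempty) := by
    ext z
    simp only [Finset.mem_filter, Finset.mem_powerset, Finset.not_nonempty_iff_eq_empty,
      Finset.subset_sdiff]
    constructor
    · rintro ⟨⟨hzw, hne⟩, hint⟩
      exact ⟨⟨hzw, Finset.disjoint_left.2 fun a ha hx =>
        Finset.eq_empty_iff_forall_notMem.1 hint a (Finset.mem_inter.2 ⟨hx, ha⟩)⟩, hne⟩
    · rintro ⟨⟨hzw, hdisj⟩, hne⟩
      refine ⟨⟨hzw, hne⟩, ?_⟩
      exact Finset.eq_empty_iff_forall_notMem.2 fun a ha =>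
        Finset.disjoint_left.1 hdisj (Finset.mem_inter.1 ha).2 (Finset.mem_inter.1 ha).1
  rw [e1, e2, sum_nonempty_powerset, sum_nonempty_powerset, if_pos hw] at split
  by_cases h : w ⊆ x
  · have : ¬ (w \ x).Nonempty := by simp [Finset.sdiff_eq_empty_iff_subset.2 h]
    rw [if_neg this] at split; rw [if_pos h]; linarith
  · have : (w \ x).Nonempty := by
      rw [Finset.sdiff_nonempty]; exact h
    rw [if_pos this] at split; rw [if_neg h]; linarith

lemma sum_interval (x y : Finset α) (hy : y.Nonempty) :
    ∑ w ∈ x.powerset.filter (fun w => y ⊆ w), (-1 : ℚ) ^ (w.card - 1)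
      = if x = y then (-1 : ℚ) ^ (y.card - 1) else 0 := by
  by_cases hyx : y ⊆ x
  · have key : ∑ w ∈ x.powerset.filter (fun w => y ⊆ w), (-1 : ℚ) ^ (w.card - 1)
        = ∑ u ∈ (x \ y).powerset, (-1 : ℚ) ^ ((y ∪ u).card - 1) := by
      refine Finset.sum_nbij' (fun w => w \ y) (fun u => y ∪ u) ?_ ?_ ?_ ?_ ?_
      · intro w hw
        simp only [Finset.mem_filter, Finset.mem_powerset] at hw
        exact Finset.mem_powerset.2 (Finset.sdiff_subset_sdiff hw.1 le_rfl)
      · intro u hu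
        simp only [Finset.mem_powerset] at hu
        simp only [Finset.mem_filter, Finset.mem_powerset]
        exact ⟨Finset.union_subset hyx (hu.trans (Finset.sdiff_subset)), Finset.subset_union_left⟩
      · intro w hw
        simp only [Finset.mem_filter, Finset.mem_powerset] at hw
        exact Finset.union_sdiff_of_subset hw.2
      · intro u hu
        simp only [Finset.mem_powerset] at hu
        have : Disjoint y u := Finset.disjoint_of_subset_right hu Finset.disjoint_sdiff
        show (y ∪ u) \ y = u
        rw [Finset.union_sdiff_cancel_left this]
      · intro w hw
        simp only [Finset.mem_filter, Finset.mem_powerset] at hw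
        rw [Finset.union_sdiff_of_subset hw.2]
    rw [key]
    have step : ∀ u ∈ (x \ y).powerset, (-1 : ℚ) ^ ((y ∪ u).card - 1)
        = (-1 : ℚ) ^ (y.card - 1) * (-1 : ℚ) ^ u.card := by
      intro u hu
      have hd : Disjoint y u := Finset.disjoint_of_subset_right
        (Finset.mem_powerset.1 hu) Finset.disjoint_sdiff
      rw [Finset.card_union_of_disjoint hd, ← pow_add]
      congr 1
      have := Finset.card_pos.2 hy
      omega
    rw [Finset.sum_congr rfl step, ← Finset.mul_sum, powQ]
    by_cases h : x = y
    · simp [h]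
    · have hne : x \ y ≠ ∅ := fun he =>
        h (le_antisymm (Finset.sdiff_eq_empty_iff_subset.1 he) hyx)
      rw [if_neg hne, if_neg h, mul_zero]
  · rw [Finset.filter_false_of_mem, Finset.sum_empty]
    · rw [if_neg (by rintro rfl; exact hyx le_rfl)]
    · intro w hw hyw
      exact hyx (hyw.trans (Finset.mem_powerset.1 hw))

def gmat (G : Finset (Finset α)) : Matrix G G ℚ :=
  fun x y => (-1 : ℚ) ^ (x.1.card - 1) * (-1 : ℚ) ^ (y.1.card - 1) *
    ∑ w ∈ G.filter (fun w => x.1 ⊆ w ∧ y.1 ⊆ w), (-1 : ℚ) ^ (w.card - 1)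

lemma green_right_inv (G : Finset (Finset α)) (hG : IsComplex G) :
    connL G * gmat G = 1 := by
  ext x y
  rw [Matrix.mul_apply, Matrix.one_apply]
  have e0 : ∑ z : ↥G, connL G x z * gmat G z y
      = ∑ z ∈ G, (if (x.1 ∩ z).Nonempty then (1:ℚ) else 0) *
          ((-1 : ℚ) ^ (z.card - 1) * (-1 : ℚ) ^ (y.1.card - 1) *
            ∑ w ∈ G.filter (fun w => z ⊆ w ∧ y.1 ⊆ w), (-1 : ℚ) ^ (w.card - 1)) :=
    Finset.sum_coe_sort G (fun z => (if (x.1 ∩ z).Nonempty then (1:ℚ) else 0) *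
          ((-1 : ℚ) ^ (z.card - 1) * (-1 : ℚ) ^ (y.1.card - 1) *
            ∑ w ∈ G.filter (fun w => z ⊆ w ∧ y.1 ⊆ w), (-1 : ℚ) ^ (w.card - 1)))
  rw [e0]
  have e1 : ∀ z ∈ G,
      (if (x.1 ∩ z).Nonempty then (1:ℚ) else 0) *
          ((-1 : ℚ) ^ (z.card - 1) * (-1 : ℚ) ^ (y.1.card - 1) *
            ∑ w ∈ G.filter (fun w => z ⊆ w ∧ y.1 ⊆ w), (-1 : ℚ) ^ (w.card - 1))
      = ∑ w ∈ G.filter (fun w => y.1 ⊆ w),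
          (if (x.1 ∩ z).Nonempty then (1:ℚ) else 0) *
            (if z ⊆ w then (-1 : ℚ) ^ (z.card - 1) * (-1 : ℚ) ^ (y.1.card - 1) *
              (-1 : ℚ) ^ (w.card - 1) else 0) := by
    intro z hz
    have hf : G.filter (fun w => z ⊆ w ∧ y.1 ⊆ w)
        = (G.filter (fun w => y.1 ⊆ w)).filter (fun w => z ⊆ w) := by
      rw [Finset.filter_filter]
      exact Finset.filter_congr fun w _ => and_comm
    rw [hf, Finset.mul_sum, Finset.sum_filter, Finset.mul_sum]
  rw [Finset.sum_congr rfl e1, Finset.sum_comm]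
  have e2 : ∀ w ∈ G.filter (fun w => y.1 ⊆ w),
      (∑ z ∈ G, (if (x.1 ∩ z).Nonempty then (1:ℚ) else 0) *
        (if z ⊆ w then (-1 : ℚ) ^ (z.card - 1) * (-1 : ℚ) ^ (y.1.card - 1) *
          (-1 : ℚ) ^ (w.card - 1) else 0))
      = (-1 : ℚ) ^ (y.1.card - 1) * (-1 : ℚ) ^ (w.card - 1) *
          (if w ⊆ x.1 then 1 else 0) := by
    intro w hw
    rw [Finset.mem_filter] at hw
    have hsum : ∑ z ∈ G, (if (x.1 ∩ z).Nonempty then (1:ℚ) else 0) *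
        (if z ⊆ w then (-1 : ℚ) ^ (z.card - 1) * (-1 : ℚ) ^ (y.1.card - 1) *
          (-1 : ℚ) ^ (w.card - 1) else 0)
        = ∑ z ∈ G.filter (fun z => (x.1 ∩ z).Nonempty ∧ z ⊆ w),
            (-1 : ℚ) ^ (z.card - 1) * (-1 : ℚ) ^ (y.1.card - 1) *
              (-1 : ℚ) ^ (w.card - 1) := by
      rw [Finset.sum_filter]
      refine Finset.sum_congr rfl fun z hz => ?_
      by_cases h1 : (x.1 ∩ z).Nonempty <;> by_cases h2 : z ⊆ w <;>
        simp [h1, h2]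
    rw [hsum]
    have hset : G.filter (fun z => (x.1 ∩ z).Nonempty ∧ z ⊆ w)
        = w.powerset.filter (fun z => (x.1 ∩ z).Nonempty) := by
      ext z
      simp only [Finset.mem_filter, Finset.mem_powerset]
      constructor
      · rintro ⟨_, h1, h2⟩; exact ⟨h2, h1⟩
      · rintro ⟨h2, h1⟩
        exact ⟨hG.2 w hw.1 z (h1.mono Finset.inter_subset_right) h2, h1, h2⟩
    rw [hset]
    have : ∑ z ∈ w.powerset.filter (fun z => (x.1 ∩ z).Nonempty),
        (-1 : ℚ) ^ (z.card - 1) * (-1 : ℚ) ^ (y.1.card - 1) * (-1 : ℚ) ^ (w.card - 1)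
        = (∑ z ∈ w.powerset.filter (fun z => (x.1 ∩ z).Nonempty),
            (-1 : ℚ) ^ (z.card - 1)) * ((-1 : ℚ) ^ (y.1.card - 1) * (-1 : ℚ) ^ (w.card - 1)) := by
      rw [Finset.sum_mul]; exact Finset.sum_congr rfl fun z _ => by ring
    rw [this, greenSumInner w x.1 (hG.1 w hw.1)]
    ring
  rw [Finset.sum_congr rfl e2]
  have e3 : ∑ w ∈ G.filter (fun w => y.1 ⊆ w),
      (-1 : ℚ) ^ (y.1.card - 1) * (-1 : ℚ) ^ (w.card - 1) * (if w ⊆ x.1 then 1 else 0)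
      = (-1 : ℚ) ^ (y.1.card - 1) *
          ∑ w ∈ (G.filter (fun w => y.1 ⊆ w)).filter (fun w => w ⊆ x.1),
            (-1 : ℚ) ^ (w.card - 1) := by
    conv_rhs => rw [Finset.mul_sum, Finset.sum_filter]
    exact Finset.sum_congr rfl fun w _ => by split <;> ring
  rw [e3]
  have hy : y.1.Nonempty := hG.1 y.1 y.2
  have e4 : (G.filter (fun w => y.1 ⊆ w)).filter (fun w => w ⊆ x.1)
      = x.1.powerset.filter (fun w => y.1 ⊆ w) := by
    ext w
    simp only [Finset.filter_filter, Finset.mem_filter, Finset.mem_powerset]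
    constructor
    · rintro ⟨_, h1, h2⟩; exact ⟨h2, h1⟩
    · rintro ⟨h2, h1⟩
      exact ⟨hG.2 x.1 x.2 w (hy.mono h1) h2, h1, h2⟩
  rw [e4, sum_interval x.1 y.1 hy]
  have hsq : (-1 : ℚ) ^ (y.1.card - 1) * (-1 : ℚ) ^ (y.1.card - 1) = 1 := by
    rw [← pow_add]
    exact Even.neg_one_pow ⟨y.1.card - 1, rfl⟩
  by_cases h : x = y
  · rw [if_pos h, if_pos (by rw [h]), hsq]
  · rw [if_neg h, if_neg (fun he => h (Subtype.ext he)), mul_zero]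

/-- Green star formula: g(x,y) = ω(x)·ω(y)·χ(W⁺(x) ∩ W⁺(y)), where
W⁺(x) ∩ W⁺(y) = { z ∈ G : x ⊆ z and y ⊆ z }. -/
theorem green_star_formula (G : Finset (Finset α)) (hG : IsComplex G)
    (x y : G) :
    (connL G)⁻¹ x y =
      (omegaS x.1 : ℚ) * (omegaS y.1 : ℚ) *
        (chi (G.filter (fun z => x.1 ⊆ z ∧ y.1 ⊆ z)) : ℚ) := by
  rw [Matrix.inv_eq_right_inv (green_right_inv G hG)]
  simp only [gmat, omegaS, chi]
  push_cast
  ring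
end

section
/- Let G be a finite abstract simplicial complex with connection matrix L, regarded as a matrix over the rationals, and let g = L^{-1}. Then for every x ∈ G, the diagonal Green function entry satisfies g(x,x) = 1 - χ(S(x)), the genus of the unit sphere of x. -/
open Finset BigOperators Matrix

variable {α : Type*} [DecidableEq α]

/-- The nonempty chains (subsets totally ordered by inclusion) of a finite
collection of finite sets. -/
def chainsOf (S : Finset (Finset α)) : Finset (Finset (Finset α)) :=
  S.powerset.filter (fun C => C.Nonempty ∧ ∀ a ∈ C, ∀ b ∈ C, a ⊆ b ∨ b ⊆ a)

/-- Euler characteristic of the simplicial complex whose simplices are the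
nonempty chains in S: ∑_C (-1)^(|C|-1). -/
def chiChains (S : Finset (Finset α)) : ℤ :=
  ∑ C ∈ chainsOf S, (-1) ^ (C.card - 1)

/-- The unit sphere of x in G: all simplices strictly contained in x or
strictly containing x. -/
def sphere (G : Finset (Finset α)) (x : Finset α) : Finset (Finset α) :=
  G.filter (fun y => y ⊂ x ∨ x ⊂ y)


set_option linter.unusedSectionVars false



/-- All chains including the empty chain. -/
def allChains (S : Finset (Finset α)) : Finset (Finset (Finset α)) :=
  S.powerset.filter (fun C => ∀ a ∈ C, ∀ b ∈ C, a ⊆ b ∨ b ⊆ a)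

def fch (S : Finset (Finset α)) : ℤ := ∑ C ∈ allChains S, (-1) ^ C.card

lemma mem_allChains {S C : Finset (Finset α)} :
    C ∈ allChains S ↔ C ⊆ S ∧ ∀ a ∈ C, ∀ b ∈ C, a ⊆ b ∨ b ⊆ a := by
  simp [allChains]

lemma empty_mem_allChains (S : Finset (Finset α)) : ∅ ∈ allChains S := by
  simp [allChains]

lemma empty_notMem_chainsOf (S : Finset (Finset α)) : ∅ ∉ chainsOf S := by
  simp [chainsOf]

lemma allChains_eq_insert (S : Finset (Finset α)) :
    allChains S = insert ∅ (chainsOf S) := by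
  ext C
  simp only [mem_allChains, mem_insert, chainsOf, mem_filter, mem_powerset]
  constructor
  · rintro ⟨h1, h2⟩
    rcases C.eq_empty_or_nonempty with h | h
    · exact Or.inl h
    · exact Or.inr ⟨h1, h, h2⟩
  · rintro (rfl | ⟨h1, _, h2⟩)
    · simp
    · exact ⟨h1, h2⟩

lemma neg_one_pow_card_of_nonempty {C : Finset (Finset α)} (h : C.Nonempty) :
    (-1 : ℤ) ^ C.card = -(-1 : ℤ) ^ (C.card - 1) := by
  have h1 : 1 ≤ C.card := Finset.card_pos.mpr h
  rw [show C.card = (C.card - 1) + 1 by omega, pow_succ]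
  simp

lemma fch_eq (S : Finset (Finset α)) : fch S = 1 - chiChains S := by
  rw [fch, allChains_eq_insert, Finset.sum_insert (empty_notMem_chainsOf S)]
  have : ∑ C ∈ chainsOf S, (-1 : ℤ) ^ C.card
      = -∑ C ∈ chainsOf S, (-1 : ℤ) ^ (C.card - 1) := by
    rw [← Finset.sum_neg_distrib]
    refine Finset.sum_congr rfl fun C hC => ?_
    have hne : C.Nonempty := by
      simp only [chainsOf, mem_filter] at hC
      exact hC.2.1
    rw [neg_one_pow_card_of_nonempty hne]
  rw [this]
  simp only [chiChains, card_empty, pow_zero]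
  ring

/-- The supremum (union) of a nonempty chain is its maximum element. -/
lemma chain_sup_mem {C : Finset (Finset α)} (hne : C.Nonempty)
    (hch : ∀ a ∈ C, ∀ b ∈ C, a ⊆ b ∨ b ⊆ a) : C.sup id ∈ C := by
  obtain ⟨m, hm, hmax⟩ := C.exists_max_image (fun y => y.card) hne
  have hm' : ∀ y ∈ C, y ⊆ m := by
    intro y hy
    rcases hch y hy m hm with h | h
    · exact h
    · have := Finset.eq_of_subset_of_card_le h (hmax y hy)
      rw [this]
  have : C.sup id = m := le_antisymm (Finset.sup_le fun y hy => hm' y hy) (Finset.le_sup (f := id) hm)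
  rw [this]; exact hm

/-- Recursion for fch, grouping nonempty chains by their maximal element. -/
lemma fch_rec (S : Finset (Finset α)) :
    fch S = 1 - ∑ m ∈ S, fch (S.filter (fun y => y ⊂ m)) := by
  rw [fch, allChains_eq_insert, Finset.sum_insert (empty_notMem_chainsOf S)]
  have hmaps : ∀ C ∈ chainsOf S, C.sup id ∈ S := by
    intro C hC
    simp only [chainsOf, mem_filter, mem_powerset] at hC
    exact hC.1 (chain_sup_mem hC.2.1 hC.2.2)
  have key : ∑ C ∈ chainsOf S, (-1 : ℤ) ^ C.card
      = ∑ m ∈ S, ∑ C ∈ (chainsOf S).filter (fun C => C.sup id = m), (-1 : ℤ) ^ C.card :=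
    (Finset.sum_fiberwise_of_maps_to hmaps _).symm
  rw [key]
  have inner : ∀ m ∈ S, ∑ C ∈ (chainsOf S).filter (fun C => C.sup id = m), (-1 : ℤ) ^ C.card
      = - fch (S.filter (fun y => y ⊂ m)) := by
    intro m hm
    rw [fch, ← Finset.sum_neg_distrib]
    refine Finset.sum_nbij' (fun C => C.erase m) (fun D => insert m D) ?_ ?_ ?_ ?_ ?_
    · intro C hC
      simp only [mem_filter, chainsOf, mem_powerset] at hC
      obtain ⟨⟨hCS, hCne, hCch⟩, hsup⟩ := hC
      have hmC : m ∈ C := by rw [← hsup]; exact chain_sup_mem hCne hCch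
      rw [mem_allChains]
      constructor
      · intro y hy
        have hy' := Finset.mem_of_mem_erase hy
        have hyne := Finset.ne_of_mem_erase hy
        have hysub : y ⊆ m := by rw [← hsup]; exact Finset.le_sup (f := id) hy'
        exact mem_filter.mpr ⟨hCS hy', lt_of_le_of_ne hysub hyne⟩
      · intro a ha b hb
        exact hCch a (Finset.mem_of_mem_erase ha) b (Finset.mem_of_mem_erase hb)
    · intro D hD
      rw [mem_allChains] at hD
      obtain ⟨hDS, hDch⟩ := hD
      have hDm : ∀ y ∈ D, y ⊂ m := fun y hy => (mem_filter.mp (hDS hy)).2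
      have hmD : m ∉ D := fun h => (hDm m h).ne rfl
      simp only [mem_filter, chainsOf, mem_powerset]
      refine ⟨⟨?_, ⟨m, Finset.mem_insert_self m D⟩, ?_⟩, ?_⟩
      · intro y hy
        rcases Finset.mem_insert.mp hy with rfl | hy
        · exact hm
        · exact (mem_filter.mp (hDS hy)).1
      · intro a ha b hb
        have hsub : ∀ c ∈ insert m D, c ⊆ m := by
          intro c hc
          rcases Finset.mem_insert.mp hc with rfl | hc
          · exact subset_rfl
          · exact (hDm c hc).subset
        by_cases ham : a = m
        · exact Or.inr (ham ▸ hsub b hb)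
        · by_cases hbm : b = m
          · exact Or.inl (hbm ▸ hsub a ha)
          · exact hDch a ((Finset.mem_insert.mp ha).resolve_left ham)
              b ((Finset.mem_insert.mp hb).resolve_left hbm)
      · refine le_antisymm (Finset.sup_le ?_) (Finset.le_sup (f := id) (Finset.mem_insert_self m D))
        intro y hy
        rcases Finset.mem_insert.mp hy with rfl | hy
        · exact subset_rfl
        · exact (hDm y hy).subset
    · intro C hC
      simp only [mem_filter, chainsOf, mem_powerset] at hC
      obtain ⟨⟨hCS, hCne, hCch⟩, hsup⟩ := hC
      have hmC : m ∈ C := by rw [← hsup]; exact chain_sup_mem hCne hCch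
      exact Finset.insert_erase hmC
    · intro D hD
      rw [mem_allChains] at hD
      have hmD : m ∉ D := by
        intro h
        exact ((mem_filter.mp (hD.1 h)).2).ne rfl
      exact Finset.erase_insert hmD
    · intro C hC
      simp only [mem_filter, chainsOf, mem_powerset] at hC
      obtain ⟨⟨hCS, hCne, hCch⟩, hsup⟩ := hC
      have hmC : m ∈ C := by rw [← hsup]; exact chain_sup_mem hCne hCch
      have : (C.erase m).card = C.card - 1 := Finset.card_erase_of_mem hmC
      rw [this, neg_one_pow_card_of_nonempty hCne]
  rw [Finset.sum_congr rfl inner, Finset.sum_neg_distrib]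
  simp only [card_empty, pow_zero]
  ring

/-- Open interval (u,v) in the boolean lattice. -/
def oI (u v : Finset α) : Finset (Finset α) :=
  v.powerset.filter (fun y => u ⊂ y ∧ y ⊂ v)

lemma mem_oI {u v y : Finset α} : y ∈ oI u v ↔ u ⊂ y ∧ y ⊂ v := by
  simp only [oI, mem_filter, mem_powerset]
  exact ⟨fun h => h.2, fun h => ⟨h.2.subset, h⟩⟩

lemma oI_filter (u v m : Finset α) (hm : m ∈ oI u v) :
    (oI u v).filter (fun y => y ⊂ m) = oI u m := by
  rw [mem_oI] at hm
  ext y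
  simp only [mem_filter, mem_oI]
  exact ⟨fun h => ⟨h.1.1, h.2⟩, fun h => ⟨⟨h.1, h.2.trans hm.2⟩, h.2⟩⟩

lemma neg_one_pow_pred {n : ℕ} (hn : 1 ≤ n) : (-1 : ℤ) ^ n = -(-1 : ℤ) ^ (n - 1) := by
  rw [show n = (n - 1) + 1 by omega, pow_succ]
  simp

/-- fch of an open interval of the boolean lattice. -/
lemma fch_oI_aux (n : ℕ) : ∀ u v : Finset α, u ⊂ v → (v \ u).card = n →
    fch (oI u v) = (-1 : ℤ) ^ ((v \ u).card - 1) := by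
  induction n using Nat.strong_induction_on with
  | _ n ih =>
  intro u v huv hn
  rw [fch_rec]
  have step : ∀ m ∈ oI u v, fch ((oI u v).filter (fun y => y ⊂ m))
      = (-1 : ℤ) ^ ((m \ u).card - 1) := by
    intro m hm
    have hm' := (mem_oI).mp hm
    rw [oI_filter u v m hm]
    have hlt : (m \ u).card < (v \ u).card := by
      apply Finset.card_lt_card
      constructor
      · exact Finset.sdiff_subset_sdiff hm'.2.subset subset_rfl
      · intro hsub
        obtain ⟨a, hav, ham⟩ := Finset.exists_of_ssubset hm'.2
        have hau : a ∉ u := fun h => ham (hm'.1.subset h)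
        have : a ∈ m \ u := hsub (Finset.mem_sdiff.mpr ⟨hav, hau⟩)
        exact ham (Finset.mem_sdiff.mp this).1
    exact ih _ (hn ▸ hlt) u m hm'.1 rfl
  rw [Finset.sum_congr rfl step]
  -- reindex m ↦ m \ u over subsets of w := v \ u
  set w := v \ u with hw
  have hwne : w.Nonempty := by
    obtain ⟨a, hav, hau⟩ := Finset.exists_of_ssubset huv
    exact ⟨a, Finset.mem_sdiff.mpr ⟨hav, hau⟩⟩
  have reindex : ∑ m ∈ oI u v, (-1 : ℤ) ^ ((m \ u).card - 1)
      = ∑ s ∈ w.powerset.filter (fun s => s ≠ ∅ ∧ s ≠ w), (-1 : ℤ) ^ (s.card - 1) := by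
    refine Finset.sum_nbij' (fun m => m \ u) (fun s => u ∪ s) ?_ ?_ ?_ ?_ ?_
    · intro m hm
      have hm' := (mem_oI).mp hm
      simp only [mem_filter, mem_powerset]
      refine ⟨Finset.sdiff_subset_sdiff hm'.2.subset subset_rfl, ?_, ?_⟩
      · intro h
        obtain ⟨a, ham, hau⟩ := Finset.exists_of_ssubset hm'.1
        exact absurd (Finset.mem_sdiff.mpr ⟨ham, hau⟩) (h ▸ Finset.notMem_empty a)
      · intro h
        have hmv : m = v := by
          have h1 : u ∪ (m \ u) = m := Finset.union_sdiff_of_subset hm'.1.subset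
          have h2 : u ∪ (v \ u) = v := Finset.union_sdiff_of_subset (hm'.1.trans hm'.2).subset
          rw [← h1, h, hw, h2]
        exact hm'.2.ne hmv
    · intro s hs
      simp only [mem_filter, mem_powerset] at hs
      obtain ⟨hsw, hsne, hsnw⟩ := hs
      have hdisj : Disjoint u s := by
        refine Finset.disjoint_left.mpr fun a hau has => ?_
        exact (Finset.mem_sdiff.mp (hsw has)).2 hau
      rw [mem_oI]
      constructor
      · refine Finset.ssubset_iff_of_subset Finset.subset_union_left |>.mpr ?_
        obtain ⟨a, ha⟩ := Finset.nonempty_iff_ne_empty.mpr hsne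
        exact ⟨a, Finset.mem_union_right u ha, (Finset.mem_sdiff.mp (hsw ha)).2⟩
      · have hsub : u ∪ s ⊆ v :=
          Finset.union_subset huv.subset (hsw.trans (Finset.sdiff_subset))
        refine lt_of_le_of_ne hsub fun h => ?_
        apply hsnw
        have : (u ∪ s) \ u = v \ u := by rw [h]
        rwa [Finset.union_sdiff_cancel_left hdisj] at this
    · intro m hm
      exact Finset.union_sdiff_of_subset ((mem_oI.mp hm).1.subset)
    · intro s hs
      simp only [mem_filter, mem_powerset] at hs
      have hdisj : Disjoint u s := by
        refine Finset.disjoint_left.mpr fun a hau has => ?_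
        exact (Finset.mem_sdiff.mp (hs.1 has)).2 hau
      exact Finset.union_sdiff_cancel_left hdisj
    · intro m hm; rfl
  rw [reindex]
  -- now evaluate the sum over proper nonempty subsets of w
  have split : w.powerset = insert ∅ (insert w (w.powerset.filter (fun s => s ≠ ∅ ∧ s ≠ w))) := by
    ext s
    simp only [mem_powerset, mem_insert, mem_filter]
    constructor
    · intro hs
      by_cases h1 : s = ∅
      · exact Or.inl h1
      · by_cases h2 : s = w
        · exact Or.inr (Or.inl h2)
        · exact Or.inr (Or.inr ⟨hs, h1, h2⟩)
    · rintro (rfl | rfl | ⟨hs, _⟩)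
      · exact Finset.empty_subset w
      · exact subset_rfl
      · exact hs
  have hsum0 : ∑ s ∈ w.powerset, (-1 : ℤ) ^ s.card = 0 := by
    rw [Finset.sum_powerset_neg_one_pow_card, if_neg (Finset.nonempty_iff_ne_empty.mp hwne)]
  rw [split] at hsum0
  have h1 : (∅ : Finset α) ∉ insert w (w.powerset.filter (fun s => s ≠ ∅ ∧ s ≠ w)) := by
    simp only [mem_insert, mem_filter, not_or]
    exact ⟨fun h => (Finset.nonempty_iff_ne_empty.mp hwne) h.symm, by simp⟩
  have h2 : w ∉ w.powerset.filter (fun s => s ≠ ∅ ∧ s ≠ w) := by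
    simp
  rw [Finset.sum_insert h1, Finset.sum_insert h2] at hsum0
  have hflip : ∑ s ∈ w.powerset.filter (fun s => s ≠ ∅ ∧ s ≠ w), (-1 : ℤ) ^ (s.card - 1)
      = -∑ s ∈ w.powerset.filter (fun s => s ≠ ∅ ∧ s ≠ w), (-1 : ℤ) ^ s.card := by
    rw [← Finset.sum_neg_distrib]
    refine Finset.sum_congr rfl fun s hs => ?_
    simp only [mem_filter] at hs
    have : 1 ≤ s.card := Finset.card_pos.mpr (Finset.nonempty_iff_ne_empty.mpr hs.2.1)
    rw [neg_one_pow_pred this]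
    ring
  have hwcard : 1 ≤ w.card := Finset.card_pos.mpr hwne
  have hfin : (-1 : ℤ) ^ w.card = -(-1 : ℤ) ^ (w.card - 1) := neg_one_pow_pred hwcard
  simp only [card_empty, pow_zero] at hsum0
  rw [hflip]
  linarith [hsum0, hfin]

lemma fch_oI (u v : Finset α) (huv : u ⊂ v) :
    fch (oI u v) = (-1 : ℤ) ^ ((v \ u).card - 1) :=
  fch_oI_aux _ u v huv rfl

/-- fch is multiplicative for a "join" decomposition. -/
lemma fch_union (A B : Finset (Finset α)) (hd : Disjoint A B)
    (hAB : ∀ a ∈ A, ∀ b ∈ B, a ⊆ b) : fch (A ∪ B) = fch A * fch B := by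
  rw [fch, fch, fch, Finset.sum_mul_sum, ← Finset.sum_product']
  refine (Finset.sum_nbij' (fun C => (C ∩ A, C ∩ B)) (fun p => p.1 ∪ p.2) ?_ ?_ ?_ ?_ ?_)
  · intro C hC
    rw [mem_allChains] at hC
    simp only [Finset.mem_product, mem_allChains]
    refine ⟨⟨Finset.inter_subset_right, ?_⟩, ⟨Finset.inter_subset_right, ?_⟩⟩ <;>
      exact fun a ha b hb => hC.2 a (Finset.mem_of_mem_inter_left ha) b
        (Finset.mem_of_mem_inter_left hb)
  · intro p hp
    simp only [Finset.mem_product, mem_allChains] at hp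
    obtain ⟨⟨h1A, h1ch⟩, ⟨h2B, h2ch⟩⟩ := hp
    rw [mem_allChains]
    constructor
    · exact Finset.union_subset (h1A.trans Finset.subset_union_left)
        (h2B.trans Finset.subset_union_right)
    · intro a ha b hb
      rcases Finset.mem_union.mp ha with ha | ha <;> rcases Finset.mem_union.mp hb with hb | hb
      · exact h1ch a ha b hb
      · exact Or.inl (hAB a (h1A ha) b (h2B hb))
      · exact Or.inr (hAB b (h1A hb) a (h2B ha))
      · exact h2ch a ha b hb
  · intro C hC
    rw [mem_allChains] at hC
    dsimp only
    rw [← Finset.inter_union_distrib_left]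
    exact Finset.inter_eq_left.mpr hC.1
  · intro p hp
    simp only [Finset.mem_product, mem_allChains] at hp
    obtain ⟨⟨h1A, _⟩, ⟨h2B, _⟩⟩ := hp
    have e2A : p.2 ∩ A = ∅ :=
      Finset.disjoint_iff_inter_eq_empty.mp (hd.symm.mono_left h2B)
    have e1B : p.1 ∩ B = ∅ :=
      Finset.disjoint_iff_inter_eq_empty.mp (hd.mono_left h1A)
    have e1 : (p.1 ∪ p.2) ∩ A = p.1 := by
      rw [Finset.union_inter_distrib_right, Finset.inter_eq_left.mpr h1A, e2A, Finset.union_empty]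
    have e2 : (p.1 ∪ p.2) ∩ B = p.2 := by
      rw [Finset.union_inter_distrib_right, Finset.inter_eq_left.mpr h2B, e1B, Finset.empty_union]
    exact Prod.ext e1 e2
  · intro C hC
    rw [mem_allChains] at hC
    dsimp only
    have hdisj : Disjoint (C ∩ A) (C ∩ B) :=
      hd.mono Finset.inter_subset_right Finset.inter_subset_right
    have hcover : (C ∩ A) ∪ (C ∩ B) = C := by
      rw [← Finset.inter_union_distrib_left]
      exact Finset.inter_eq_left.mpr hC.1
    rw [← pow_add, ← Finset.card_union_of_disjoint hdisj, hcover]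

lemma fch_sphere (G : Finset (Finset α)) (hG : IsComplex G) {x : Finset α} (hx : x ∈ G) :
    fch (sphere G x) = ∑ z ∈ G.filter (fun z => x ⊆ z), (-1 : ℤ) ^ (z.card - 1) := by
  have hxne : x.Nonempty := hG.1 x hx
  have hxc : 1 ≤ x.card := Finset.card_pos.mpr hxne
  set A := G.filter (fun y => y ⊂ x) with hA
  set B := G.filter (fun y => x ⊂ y) with hB
  have hsph : sphere G x = A ∪ B := by rw [sphere, Finset.filter_or]
  have hdisj : Disjoint A B := by
    refine Finset.disjoint_left.mpr fun y hyA hyB => ?_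
    exact absurd ((mem_filter.mp hyA).2.trans (mem_filter.mp hyB).2) (lt_irrefl y)
  have hcross : ∀ a ∈ A, ∀ b ∈ B, a ⊆ b := fun a ha b hb =>
    ((mem_filter.mp ha).2.trans (mem_filter.mp hb).2).subset
  have hAoI : A = oI ∅ x := by
    ext y
    rw [hA, mem_filter, mem_oI]
    constructor
    · exact fun h => ⟨Finset.empty_ssubset.mpr (hG.1 y h.1), h.2⟩
    · exact fun h => ⟨hG.2 x hx y (Finset.empty_ssubset.mp h.1) h.2.subset, h.2⟩
  have hfchA : fch A = (-1 : ℤ) ^ (x.card - 1) := by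
    rw [hAoI, fch_oI ∅ x (Finset.empty_ssubset.mpr hxne), Finset.sdiff_empty]
  have hfchB : fch B = 1 - ∑ m ∈ B, (-1 : ℤ) ^ ((m \ x).card - 1) := by
    rw [fch_rec B]
    congr 1
    refine Finset.sum_congr rfl fun m hm => ?_
    have hmG : m ∈ G := (mem_filter.mp hm).1
    have hxm : x ⊂ m := (mem_filter.mp hm).2
    have hBf : B.filter (fun y => y ⊂ m) = oI x m := by
      ext y
      rw [hB, Finset.filter_filter, mem_filter, mem_oI]
      constructor
      · exact fun h => ⟨h.2.1, h.2.2⟩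
      · refine fun h => ⟨?_, h.1, h.2⟩
        exact hG.2 m hmG y (hxne.mono h.1.subset) h.2.subset
    rw [hBf, fch_oI x m hxm]
  have hfilter : G.filter (fun z => x ⊆ z) = insert x B := by
    ext z
    rw [mem_filter, Finset.mem_insert, hB, mem_filter]
    constructor
    · rintro ⟨hzG, hxz⟩
      rcases eq_or_ne z x with rfl | hne
      · exact Or.inl rfl
      · exact Or.inr ⟨hzG, lt_of_le_of_ne hxz (Ne.symm hne)⟩
    · rintro (rfl | ⟨hzG, hxz⟩)
      · exact ⟨hx, subset_rfl⟩
      · exact ⟨hzG, hxz.subset⟩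
  have hxB : x ∉ B := by
    rw [hB, mem_filter]
    exact fun h => (lt_irrefl x) h.2
  rw [hsph, fch_union A B hdisj hcross, hfchA, hfchB, hfilter,
    Finset.sum_insert hxB, mul_sub, mul_one, Finset.mul_sum]
  have hterm : ∀ m ∈ B, (-1 : ℤ) ^ (x.card - 1) * (-1 : ℤ) ^ ((m \ x).card - 1)
      = -(-1 : ℤ) ^ (m.card - 1) := by
    intro m hm
    have hxm : x ⊂ m := (mem_filter.mp hm).2
    have hmc : x.card < m.card := Finset.card_lt_card hxm
    rw [← pow_add, Finset.card_sdiff_of_subset hxm.subset,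
      show x.card - 1 + (m.card - x.card - 1) = m.card - 2 from by omega,
      show m.card - 1 = (m.card - 2) + 1 from by omega, pow_succ]
    ring
  rw [Finset.sum_congr rfl hterm, Finset.sum_neg_distrib]
  ring




def Mz (G : Finset (Finset α)) : Matrix G G ℚ :=
  fun x z => if z.1 ⊆ x.1 then 1 else 0

def Nz (G : Finset (Finset α)) : Matrix G G ℚ :=
  fun z x => if x.1 ⊆ z.1 then (-1) ^ (z.1.card - x.1.card) else 0

def Dz (G : Finset (Finset α)) : Matrix G G ℚ :=
  Matrix.diagonal (fun z => (-1) ^ (z.1.card - 1))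

lemma q_neg_one_pow_even (n : ℕ) : (-1 : ℚ) ^ n * (-1 : ℚ) ^ n = 1 := by
  rw [← pow_add]
  exact Even.neg_one_pow ⟨n, rfl⟩

lemma q_neg_one_pow_pred {n : ℕ} (hn : 1 ≤ n) : (-1 : ℚ) ^ n = -(-1 : ℚ) ^ (n - 1) := by
  rw [show n = (n - 1) + 1 by omega, pow_succ]
  simp

lemma q_sum_powerset (s : Finset α) :
    ∑ m ∈ s.powerset, (-1 : ℚ) ^ m.card = if s = ∅ then 1 else 0 := by
  have h := Finset.sum_powerset_neg_one_pow_card (x := s)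
  have h2 : ((∑ m ∈ s.powerset, (-1 : ℤ) ^ m.card : ℤ) : ℚ)
      = ∑ m ∈ s.powerset, (-1 : ℚ) ^ m.card := by push_cast; rfl
  rw [← h2, h]
  split_ifs <;> simp

/-- Key Möbius-type sum: over supersets of b inside a. -/
lemma sum_sub_powerset {a b : Finset α} (hba : b ⊆ a) :
    ∑ c ∈ a.powerset.filter (fun c => b ⊆ c), (-1 : ℚ) ^ c.card
      = (-1 : ℚ) ^ b.card * (if a = b then 1 else 0) := by
  have step : ∑ c ∈ a.powerset.filter (fun c => b ⊆ c), (-1 : ℚ) ^ c.card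
      = ∑ s ∈ (a \ b).powerset, (-1 : ℚ) ^ (b.card + s.card) := by
    refine Finset.sum_nbij' (fun c => c \ b) (fun s => b ∪ s) ?_ ?_ ?_ ?_ ?_
    · intro c hc
      simp only [mem_filter, mem_powerset] at hc ⊢
      exact Finset.sdiff_subset_sdiff hc.1 subset_rfl
    · intro s hs
      simp only [mem_powerset] at hs
      simp only [mem_filter, mem_powerset]
      exact ⟨Finset.union_subset hba (hs.trans Finset.sdiff_subset), Finset.subset_union_left⟩
    · intro c hc
      simp only [mem_filter, mem_powerset] at hc
      exact Finset.union_sdiff_of_subset hc.2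
    · intro s hs
      simp only [mem_powerset] at hs
      have hdisj : Disjoint b s := Finset.disjoint_left.mpr fun t htb hts =>
        (Finset.mem_sdiff.mp (hs hts)).2 htb
      exact Finset.union_sdiff_cancel_left hdisj
    · intro c hc
      simp only [mem_filter, mem_powerset] at hc
      congr 1
      rw [Finset.card_sdiff_of_subset hc.2]
      have := Finset.card_le_card hc.2
      omega
  rw [step]
  have : ∀ s ∈ (a \ b).powerset, (-1 : ℚ) ^ (b.card + s.card)
      = (-1 : ℚ) ^ b.card * (-1 : ℚ) ^ s.card := fun s _ => pow_add _ _ _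
  rw [Finset.sum_congr rfl this, ← Finset.mul_sum, q_sum_powerset]
  congr 1
  by_cases h : a = b
  · simp [h]
  · have : a \ b ≠ ∅ := by
      intro he
      exact h (le_antisymm (Finset.sdiff_eq_empty_iff_subset.mp he) hba)
    simp [this, h]

lemma q_neg_one_pow_sub {a b : ℕ} (h : b ≤ a) :
    (-1 : ℚ) ^ (a - b) = (-1 : ℚ) ^ a * (-1 : ℚ) ^ b := by
  have h1 : (-1 : ℚ) ^ (a - b) * (-1 : ℚ) ^ b = (-1 : ℚ) ^ a := by
    rw [← pow_add, Nat.sub_add_cancel h]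
  calc (-1 : ℚ) ^ (a - b) = (-1 : ℚ) ^ (a - b) * ((-1 : ℚ) ^ b * (-1 : ℚ) ^ b) := by
        rw [q_neg_one_pow_even]; ring
    _ = ((-1 : ℚ) ^ (a - b) * (-1 : ℚ) ^ b) * (-1 : ℚ) ^ b := by ring
    _ = (-1 : ℚ) ^ a * (-1 : ℚ) ^ b := by rw [h1]

lemma DzDz (G : Finset (Finset α)) : Dz G * Dz G = 1 := by
  rw [Dz, Matrix.diagonal_mul_diagonal]
  have h : (fun i : {s // s ∈ G} => (-1 : ℚ) ^ (i.1.card - 1) * (-1 : ℚ) ^ (i.1.card - 1))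
      = fun _ => (1 : ℚ) := funext fun i => q_neg_one_pow_even _
  rw [h, Matrix.diagonal_one]

lemma L_fact (G : Finset (Finset α)) (hG : IsComplex G) :
    connL G = Mz G * Dz G * (Mz G)ᵀ := by
  ext x y
  rw [Matrix.mul_apply]
  simp only [Dz, Matrix.mul_diagonal, Matrix.transpose_apply, Mz, connL]
  have hs : ∑ z : {s // s ∈ G}, ((if z.1 ⊆ x.1 then (1:ℚ) else 0) * (-1) ^ (z.1.card - 1)
        * if z.1 ⊆ y.1 then (1:ℚ) else 0)
      = ∑ z ∈ G, ((if z ⊆ x.1 then (1:ℚ) else 0) * (-1) ^ (z.card - 1)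
        * if z ⊆ y.1 then (1:ℚ) else 0) :=
    Finset.sum_coe_sort G (fun z => (if z ⊆ x.1 then (1:ℚ) else 0) * (-1) ^ (z.card - 1)
      * if z ⊆ y.1 then (1:ℚ) else 0)
  rw [hs]
  have hs2 : ∀ z ∈ G, ((if z ⊆ x.1 then (1:ℚ) else 0) * (-1) ^ (z.card - 1)
        * if z ⊆ y.1 then (1:ℚ) else 0)
      = if z ⊆ x.1 ∧ z ⊆ y.1 then (-1 : ℚ) ^ (z.card - 1) else 0 := by
    intro z _
    by_cases h1 : z ⊆ x.1 <;> by_cases h2 : z ⊆ y.1 <;> simp [h1, h2]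
  rw [Finset.sum_congr rfl hs2, ← Finset.sum_filter]
  have hset : G.filter (fun z => z ⊆ x.1 ∧ z ⊆ y.1)
      = (x.1 ∩ y.1).powerset.filter (fun z => z ≠ ∅) := by
    ext z
    simp only [mem_filter, mem_powerset]
    constructor
    · rintro ⟨hzG, h1, h2⟩
      exact ⟨Finset.subset_inter h1 h2, Finset.nonempty_iff_ne_empty.mp (hG.1 z hzG)⟩
    · rintro ⟨hz, hne⟩
      have h1 : z ⊆ x.1 := hz.trans Finset.inter_subset_left
      exact ⟨hG.2 x.1 x.2 z (Finset.nonempty_iff_ne_empty.mpr hne) h1, h1,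
        hz.trans Finset.inter_subset_right⟩
  rw [hset]
  have hpow : (x.1 ∩ y.1).powerset
      = insert ∅ ((x.1 ∩ y.1).powerset.filter (fun z => z ≠ ∅)) := by
    ext z
    simp only [mem_powerset, mem_insert, mem_filter, mem_powerset]
    constructor
    · intro h
      by_cases hz : z = ∅
      · exact Or.inl hz
      · exact Or.inr ⟨h, hz⟩
    · rintro (rfl | ⟨h, _⟩)
      · exact Finset.empty_subset _
      · exact h
  have hsum := q_sum_powerset (x.1 ∩ y.1)
  rw [hpow, Finset.sum_insert (by simp)] at hsum
  simp only [card_empty, pow_zero] at hsum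
  have hflip : ∑ z ∈ (x.1 ∩ y.1).powerset.filter (fun z => z ≠ ∅), (-1 : ℚ) ^ (z.card - 1)
      = -∑ z ∈ (x.1 ∩ y.1).powerset.filter (fun z => z ≠ ∅), (-1 : ℚ) ^ z.card := by
    rw [← Finset.sum_neg_distrib]
    refine Finset.sum_congr rfl fun z hz => ?_
    simp only [mem_filter] at hz
    have : 1 ≤ z.card := Finset.card_pos.mpr (Finset.nonempty_iff_ne_empty.mpr hz.2)
    rw [q_neg_one_pow_pred this]
    ring
  rw [hflip]
  by_cases h : (x.1 ∩ y.1).Nonempty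
  · rw [if_pos h, if_neg (Finset.nonempty_iff_ne_empty.mp h)] at *
    linarith
  · rw [if_neg h, if_pos (Finset.not_nonempty_iff_eq_empty.mp h)] at *
    linarith

lemma NM (G : Finset (Finset α)) (hG : IsComplex G) : Nz G * Mz G = 1 := by
  ext a b
  rw [Matrix.mul_apply, Matrix.one_apply]
  simp only [Nz, Mz]
  have hs : ∑ c : {s // s ∈ G}, ((if c.1 ⊆ a.1 then (-1 : ℚ) ^ (a.1.card - c.1.card) else 0)
        * if b.1 ⊆ c.1 then (1:ℚ) else 0)
      = ∑ c ∈ G, ((if c ⊆ a.1 then (-1 : ℚ) ^ (a.1.card - c.card) else 0)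
        * if b.1 ⊆ c then (1:ℚ) else 0) :=
    Finset.sum_coe_sort G (fun c => (if c ⊆ a.1 then (-1 : ℚ) ^ (a.1.card - c.card) else 0)
      * if b.1 ⊆ c then (1:ℚ) else 0)
  rw [hs]
  have hs2 : ∀ c ∈ G, ((if c ⊆ a.1 then (-1 : ℚ) ^ (a.1.card - c.card) else 0)
        * if b.1 ⊆ c then (1:ℚ) else 0)
      = if b.1 ⊆ c ∧ c ⊆ a.1 then (-1 : ℚ) ^ (a.1.card - c.card) else 0 := by
    intro c _
    by_cases h1 : b.1 ⊆ c <;> by_cases h2 : c ⊆ a.1 <;> simp [h1, h2]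
  rw [Finset.sum_congr rfl hs2, ← Finset.sum_filter]
  have hset : G.filter (fun c => b.1 ⊆ c ∧ c ⊆ a.1)
      = a.1.powerset.filter (fun c => b.1 ⊆ c) := by
    ext c
    simp only [mem_filter, mem_powerset]
    constructor
    · rintro ⟨_, h1, h2⟩; exact ⟨h2, h1⟩
    · rintro ⟨h1, h2⟩
      exact ⟨hG.2 a.1 a.2 c ((hG.1 b.1 b.2).mono h2) h1, h2, h1⟩
  rw [hset]
  by_cases hba : b.1 ⊆ a.1
  · have hpt : ∀ c ∈ a.1.powerset.filter (fun c => b.1 ⊆ c),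
        (-1 : ℚ) ^ (a.1.card - c.card) = (-1 : ℚ) ^ a.1.card * (-1 : ℚ) ^ c.card := by
      intro c hc
      simp only [mem_filter, mem_powerset] at hc
      exact q_neg_one_pow_sub (Finset.card_le_card hc.1)
    rw [Finset.sum_congr rfl hpt, ← Finset.mul_sum, sum_sub_powerset hba]
    by_cases hab : a.1 = b.1
    · have : a = b := Subtype.ext hab
      rw [if_pos hab, if_pos this, hab]
      rw [mul_one, q_neg_one_pow_even]
    · have : a ≠ b := fun h => hab (congrArg Subtype.val h)
      rw [if_neg hab, if_neg this]
      ring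
  · have hempty : a.1.powerset.filter (fun c => b.1 ⊆ c) = ∅ := by
      refine Finset.filter_eq_empty_iff.mpr fun c hc => ?_
      rw [mem_powerset] at hc
      exact fun hbc => hba (hbc.trans hc)
    have hne : a ≠ b := fun h => hba (h ▸ subset_rfl)
    rw [hempty, Finset.sum_empty, if_neg hne]

lemma green_inv (G : Finset (Finset α)) (hG : IsComplex G) :
    (connL G)⁻¹ = (Nz G)ᵀ * Dz G * Nz G := by
  have hNM := NM G hG
  have hMN : Mz G * Nz G = 1 := mul_eq_one_comm.mp hNM
  refine Matrix.inv_eq_right_inv ?_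
  rw [L_fact G hG]
  simp only [Matrix.mul_assoc]
  have e1 : (Mz G)ᵀ * ((Nz G)ᵀ * (Dz G * Nz G)) = Dz G * Nz G := by
    rw [← Matrix.mul_assoc, ← Matrix.transpose_mul, hNM, Matrix.transpose_one,
      Matrix.one_mul]
  rw [e1, ← Matrix.mul_assoc (Dz G) (Dz G) (Nz G), DzDz, Matrix.one_mul, hMN]

lemma green_entry (G : Finset (Finset α)) (hG : IsComplex G) (x : G) :
    (connL G)⁻¹ x x = ∑ z ∈ G.filter (fun z => x.1 ⊆ z), (-1 : ℚ) ^ (z.card - 1) := by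
  rw [green_inv G hG, Matrix.mul_apply]
  simp only [Dz, Matrix.mul_diagonal, Matrix.transpose_apply, Nz]
  have hs : ∑ c : {s // s ∈ G}, ((if x.1 ⊆ c.1 then (-1 : ℚ) ^ (c.1.card - x.1.card) else 0)
        * (-1 : ℚ) ^ (c.1.card - 1)
        * if x.1 ⊆ c.1 then (-1 : ℚ) ^ (c.1.card - x.1.card) else 0)
      = ∑ c ∈ G, ((if x.1 ⊆ c then (-1 : ℚ) ^ (c.card - x.1.card) else 0)
        * (-1 : ℚ) ^ (c.card - 1)
        * if x.1 ⊆ c then (-1 : ℚ) ^ (c.card - x.1.card) else 0) :=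
    Finset.sum_coe_sort G (fun c => (if x.1 ⊆ c then (-1 : ℚ) ^ (c.card - x.1.card) else 0)
      * (-1 : ℚ) ^ (c.card - 1) * if x.1 ⊆ c then (-1 : ℚ) ^ (c.card - x.1.card) else 0)
  rw [hs]
  have hs2 : ∀ c ∈ G, ((if x.1 ⊆ c then (-1 : ℚ) ^ (c.card - x.1.card) else 0)
        * (-1 : ℚ) ^ (c.card - 1)
        * if x.1 ⊆ c then (-1 : ℚ) ^ (c.card - x.1.card) else 0)
      = if x.1 ⊆ c then (-1 : ℚ) ^ (c.card - 1) else 0 := by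
    intro c _
    split_ifs with h
    · have h2 := q_neg_one_pow_even (c.card - x.1.card)
      linear_combination ((-1 : ℚ) ^ (c.card - 1)) * h2
    · ring
  rw [Finset.sum_congr rfl hs2, ← Finset.sum_filter]

/-- Diagonal Green function entries: g(x,x) = 1 - χ(S(x)), the genus of the
unit sphere of x. -/
theorem green_diagonal (G : Finset (Finset α)) (hG : IsComplex G) (x : G) :
    (connL G)⁻¹ x x = 1 - (chiChains (sphere G x.1) : ℚ) := by
  rw [green_entry G hG x]
  have h1 : (1 : ℚ) - (chiChains (sphere G x.1) : ℚ) = ((fch (sphere G x.1) : ℤ) : ℚ) := by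
    rw [fch_eq]; push_cast; ring
  rw [h1, fch_sphere G hG x.2]
  push_cast
  rfl
end

section
/- Let G be a finite abstract simplicial complex with connection matrix L, regarded as a matrix over the rationals, and let g = L^{-1}. If x ∈ G is a facet (a simplex maximal with respect to inclusion among the elements of G) and y ∈ G satisfies y ⊆ x, then g(x,y) = ω(y). -/
open Finset BigOperators
open scoped Matrix

variable {α : Type*} [DecidableEq α]

/-- aux: the "zeta" matrix of inclusion. -/
def Umat (G : Finset (Finset α)) : Matrix G G ℚ :=
  fun z x => if z.1 ⊆ x.1 then 1 else 0

/-- aux: the Möbius matrix, inverse of `Umat`. -/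
def Mmat (G : Finset (Finset α)) : Matrix G G ℚ :=
  fun w x => if w.1 ⊆ x.1 then (-1) ^ (x.1.card - w.1.card) else 0

/-- aux: the diagonal matrix of ω values. -/
def Dmat (G : Finset (Finset α)) : Matrix G G ℚ :=
  Matrix.diagonal (fun z : G => ((omegaS z.1 : ℤ) : ℚ))

lemma sum_pow_sub (s : Finset α) :
    ∑ t ∈ s.powerset, ((-1 : ℚ)) ^ (s.card - t.card) = if s = ∅ then 1 else 0 := by
  have h : ∀ t ∈ s.powerset, ((-1 : ℚ)) ^ (s.card - t.card)
      = (-1) ^ s.card * (-1) ^ t.card := by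
    intro t ht
    have hle := Finset.card_le_card (Finset.mem_powerset.mp ht)
    rw [← pow_add, neg_one_pow_eq_pow_mod_two (s.card - t.card),
      neg_one_pow_eq_pow_mod_two (s.card + t.card)]
    congr 1
    omega
  have hz : ∑ t ∈ s.powerset, ((-1 : ℚ)) ^ t.card = if s = ∅ then 1 else 0 := by
    have h0 : ((∑ t ∈ s.powerset, ((-1 : ℤ)) ^ t.card : ℤ) : ℚ)
        = ((if s = ∅ then 1 else 0 : ℤ) : ℚ) := by
      exact_mod_cast congrArg (Int.cast : ℤ → ℚ) Finset.sum_powerset_neg_one_pow_card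
    push_cast at h0
    convert h0 using 2
  rw [Finset.sum_congr rfl h, ← Finset.mul_sum, hz]
  split_ifs with hs
  · subst hs; simp
  · simp

lemma sum_pow_nonempty (s : Finset α) :
    ∑ t ∈ s.powerset.filter (·.Nonempty), ((-1 : ℚ)) ^ (t.card - 1)
      = if s.Nonempty then 1 else 0 := by
  have hps : s.powerset = insert ∅ (s.powerset.filter (·.Nonempty)) := by
    ext t
    simp only [Finset.mem_insert, Finset.mem_filter, Finset.mem_powerset]
    constructor
    · intro ht
      rcases Finset.eq_empty_or_nonempty t with h | h
      · exact Or.inl h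
      · exact Or.inr ⟨ht, h⟩
    · rintro (rfl | ⟨h, _⟩)
      · exact Finset.empty_subset s
      · exact h
  have hnm : (∅ : Finset α) ∉ s.powerset.filter (·.Nonempty) := by
    simp [Finset.not_nonempty_empty]
  have h1 : ∑ t ∈ s.powerset, ((-1 : ℚ)) ^ t.card = if s = ∅ then 1 else 0 := by
    have h0 : ((∑ t ∈ s.powerset, ((-1 : ℤ)) ^ t.card : ℤ) : ℚ)
        = ((if s = ∅ then 1 else 0 : ℤ) : ℚ) := by
      exact_mod_cast congrArg (Int.cast : ℤ → ℚ) Finset.sum_powerset_neg_one_pow_card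
    push_cast at h0
    convert h0 using 2
  rw [hps, Finset.sum_insert hnm] at h1
  have h2 : ∀ t ∈ s.powerset.filter (·.Nonempty),
      ((-1 : ℚ)) ^ (t.card - 1) = -((-1) ^ t.card) := by
    intro t ht
    have htne : t.Nonempty := (Finset.mem_filter.mp ht).2
    have hc : 1 ≤ t.card := Finset.card_pos.mpr htne
    have hp : (-1 : ℚ) ^ t.card = (-1) ^ (t.card - 1) * (-1) := by
      rw [← pow_succ]
      congr 1
      omega
    rw [hp]
    ring
  rw [Finset.sum_congr rfl h2, Finset.sum_neg_distrib]
  rcases Finset.eq_empty_or_nonempty s with rfl | hs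
  · simp at h1 ⊢
    linarith
  · rw [if_pos hs]
    rw [if_neg hs.ne_empty] at h1
    simp at h1
    linarith

lemma UM_eq_one (G : Finset (Finset α)) (hG : IsComplex G) : Umat G * Mmat G = 1 := by
  ext z x
  rw [Matrix.mul_apply]
  have hterm : ∀ w : {w // w ∈ G},
      Umat G z w * Mmat G w x
        = if z.1 ⊆ w.1 ∧ w.1 ⊆ x.1 then ((-1 : ℚ)) ^ (x.1.card - w.1.card) else 0 := by
    intro w
    simp only [Umat, Mmat]
    split_ifs <;> simp_all
  rw [Finset.sum_congr rfl (fun w _ => hterm w)]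
  have hcoe : (∑ w : {w // w ∈ G},
      (if z.1 ⊆ w.1 ∧ w.1 ⊆ x.1 then ((-1 : ℚ)) ^ (x.1.card - w.1.card) else 0))
      = ∑ w ∈ G, (if z.1 ⊆ w ∧ w ⊆ x.1 then ((-1 : ℚ)) ^ (x.1.card - w.card) else 0) :=
    Finset.sum_coe_sort G
      (fun w => if z.1 ⊆ w ∧ w ⊆ x.1 then ((-1 : ℚ)) ^ (x.1.card - w.card) else 0)
  rw [hcoe]
  set S := x.1.powerset.filter (fun t => z.1 ⊆ t) with hS
  have hSG : S ⊆ G := by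
    intro t ht
    rw [hS, Finset.mem_filter, Finset.mem_powerset] at ht
    have hzne : z.1.Nonempty := hG.1 z.1 z.2
    exact hG.2 x.1 x.2 t (hzne.mono ht.2) ht.1
  have hsum : (∑ w ∈ G, (if z.1 ⊆ w ∧ w ⊆ x.1 then ((-1 : ℚ)) ^ (x.1.card - w.card) else 0))
      = ∑ w ∈ S, (if z.1 ⊆ w ∧ w ⊆ x.1 then ((-1 : ℚ)) ^ (x.1.card - w.card) else 0) := by
    refine (Finset.sum_subset hSG ?_).symm
    intro w hw hwS
    rw [if_neg]
    intro ⟨h1, h2⟩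
    exact hwS (by rw [hS, Finset.mem_filter, Finset.mem_powerset]; exact ⟨h2, h1⟩)
  rw [hsum]
  by_cases hzx : z.1 ⊆ x.1
  · have hbij : (∑ w ∈ S, (if z.1 ⊆ w ∧ w ⊆ x.1 then ((-1 : ℚ)) ^ (x.1.card - w.card) else 0))
        = ∑ t ∈ (x.1 \ z.1).powerset, ((-1 : ℚ)) ^ ((x.1 \ z.1).card - t.card) := by
      refine Finset.sum_nbij' (fun t => t \ z.1) (fun t => t ∪ z.1) ?_ ?_ ?_ ?_ ?_
      · intro a ha
        rw [hS, Finset.mem_filter, Finset.mem_powerset] at ha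
        rw [Finset.mem_powerset]
        exact Finset.sdiff_subset_sdiff ha.1 (le_refl _)
      · intro a ha
        rw [Finset.mem_powerset] at ha
        rw [hS, Finset.mem_filter, Finset.mem_powerset]
        constructor
        · exact Finset.union_subset (ha.trans (Finset.sdiff_subset)) hzx
        · exact Finset.subset_union_right
      · intro a ha
        rw [hS, Finset.mem_filter, Finset.mem_powerset] at ha
        rw [Finset.sdiff_union_of_subset ha.2]
      · intro a ha
        rw [Finset.mem_powerset] at ha
        have : Disjoint a z.1 := Finset.disjoint_of_subset_left ha Finset.sdiff_disjoint
        rw [Finset.union_sdiff_cancel_right this]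
      · intro a ha
        rw [hS, Finset.mem_filter, Finset.mem_powerset] at ha
        rw [if_pos ⟨ha.2, ha.1⟩]
        congr 1
        have h1 := Finset.card_sdiff_of_subset ha.2
        have h2 := Finset.card_sdiff_of_subset hzx
        have h3 := Finset.card_le_card ha.1
        have h4 := Finset.card_le_card ha.2
        omega
    rw [hbij, sum_pow_sub, Matrix.one_apply]
    have : (x.1 \ z.1 = ∅) ↔ z = x := by
      rw [Finset.sdiff_eq_empty_iff_subset]
      constructor
      · intro h; exact Subtype.ext (Finset.Subset.antisymm hzx h)
      · intro h; rw [h]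
    simp [this]
  · have hSempty : S = ∅ := by
      rw [hS, Finset.filter_eq_empty_iff]
      intro t ht
      rw [Finset.mem_powerset] at ht
      intro hzt
      exact hzx (hzt.trans ht)
    rw [hSempty, Finset.sum_empty, Matrix.one_apply, if_neg]
    intro h
    exact hzx (by rw [h])

lemma L_factor (G : Finset (Finset α)) (hG : IsComplex G) :
    connL G = (Umat G)ᵀ * Dmat G * Umat G := by
  ext x y
  rw [Matrix.mul_apply]
  have hterm : ∀ z : {z // z ∈ G},
      ((Umat G)ᵀ * Dmat G) x z * Umat G z y
        = if z.1 ⊆ x.1 ∧ z.1 ⊆ y.1 then ((-1 : ℚ)) ^ (z.1.card - 1) else 0 := by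
    intro z
    rw [Dmat, Matrix.mul_diagonal]
    simp only [Umat, Matrix.transpose_apply, omegaS]
    push_cast
    split_ifs <;> simp_all
  rw [Finset.sum_congr rfl (fun z _ => hterm z)]
  have hcoe : (∑ z : {z // z ∈ G},
      (if z.1 ⊆ x.1 ∧ z.1 ⊆ y.1 then ((-1 : ℚ)) ^ (z.1.card - 1) else 0))
      = ∑ z ∈ G, (if z ⊆ x.1 ∧ z ⊆ y.1 then ((-1 : ℚ)) ^ (z.card - 1) else 0) :=
    Finset.sum_coe_sort G
      (fun z => if z ⊆ x.1 ∧ z ⊆ y.1 then ((-1 : ℚ)) ^ (z.card - 1) else 0)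
  rw [hcoe]
  set T := (x.1 ∩ y.1).powerset.filter (·.Nonempty) with hT
  have hTG : T ⊆ G := by
    intro t ht
    rw [hT, Finset.mem_filter, Finset.mem_powerset] at ht
    exact hG.2 x.1 x.2 t ht.2 (ht.1.trans Finset.inter_subset_left)
  have hsum : (∑ z ∈ G, (if z ⊆ x.1 ∧ z ⊆ y.1 then ((-1 : ℚ)) ^ (z.card - 1) else 0))
      = ∑ z ∈ T, (if z ⊆ x.1 ∧ z ⊆ y.1 then ((-1 : ℚ)) ^ (z.card - 1) else 0) := by
    refine (Finset.sum_subset hTG ?_).symm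
    intro w hw hwT
    rw [if_neg]
    intro ⟨h1, h2⟩
    refine hwT ?_
    rw [hT, Finset.mem_filter, Finset.mem_powerset]
    exact ⟨Finset.subset_inter h1 h2, hG.1 w hw⟩
  rw [hsum]
  have heq : ∀ z ∈ T, (if z ⊆ x.1 ∧ z ⊆ y.1 then ((-1 : ℚ)) ^ (z.card - 1) else 0)
      = ((-1 : ℚ)) ^ (z.card - 1) := by
    intro z hz
    rw [hT, Finset.mem_filter, Finset.mem_powerset, Finset.subset_inter_iff] at hz
    rw [if_pos hz.1]
  rw [Finset.sum_congr rfl heq, sum_pow_nonempty, connL]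

lemma DD_eq_one (G : Finset (Finset α)) : Dmat G * Dmat G = 1 := by
  rw [Dmat, Matrix.diagonal_mul_diagonal, ← Matrix.diagonal_one]
  refine congrArg Matrix.diagonal (funext fun z => ?_)
  simp only [omegaS]
  push_cast
  rw [← pow_add]
  exact Even.neg_one_pow ⟨z.1.card - 1, by ring⟩

/-- If x is a facet of G (maximal with respect to inclusion) and y ⊆ x is in G,
then the Green function entry is g(x,y) = ω(y). -/
theorem green_entry_facet (G : Finset (Finset α)) (hG : IsComplex G)
    (x y : G) (hfacet : ∀ z ∈ G, x.1 ⊆ z → z = x.1) (hyx : y.1 ⊆ x.1) :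
    (connL G)⁻¹ x y = (omegaS y.1 : ℚ) := by
  have hUM := UM_eq_one G hG
  have hMU : Mmat G * Umat G = 1 := mul_eq_one_comm.mp hUM
  have hDD := DD_eq_one G
  have hinv : connL G * (Mmat G * Dmat G * (Mmat G)ᵀ) = 1 := by
    rw [L_factor G hG]
    calc (Umat G)ᵀ * Dmat G * Umat G * (Mmat G * Dmat G * (Mmat G)ᵀ)
        = (Umat G)ᵀ * (Dmat G * ((Umat G * Mmat G) * (Dmat G * (Mmat G)ᵀ))) := by
          simp only [Matrix.mul_assoc]
      _ = (Umat G)ᵀ * ((Dmat G * Dmat G) * (Mmat G)ᵀ) := by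
          rw [hUM, one_mul, Matrix.mul_assoc]
      _ = (Umat G)ᵀ * (Mmat G)ᵀ := by rw [hDD, one_mul]
      _ = (Mmat G * Umat G)ᵀ := (Matrix.transpose_mul _ _).symm
      _ = 1 := by rw [hMU, Matrix.transpose_one]
  rw [Matrix.inv_eq_right_inv hinv]
  rw [Matrix.mul_apply]
  have hterm : ∀ z : {z // z ∈ G},
      (Mmat G * Dmat G) x z * (Mmat G)ᵀ z y
        = Mmat G x z * ((omegaS z.1 : ℤ) : ℚ) * Mmat G y z := by
    intro z
    rw [Dmat, Matrix.mul_diagonal, Matrix.transpose_apply]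
  rw [Finset.sum_congr rfl (fun z _ => hterm z)]
  rw [Finset.sum_eq_single x]
  · have hxx : Mmat G x x = 1 := by
      rw [Mmat]; simp
    have hyxv : Mmat G y x = ((-1 : ℚ)) ^ (x.1.card - y.1.card) := by
      rw [Mmat, if_pos hyx]
    rw [hxx, hyxv, one_mul]
    simp only [omegaS]
    push_cast
    rw [← pow_add, neg_one_pow_eq_pow_mod_two,
      neg_one_pow_eq_pow_mod_two (n := y.1.card - 1)]
    congr 1
    have h1 : 1 ≤ y.1.card := Finset.card_pos.mpr (hG.1 y.1 y.2)
    have h2 : y.1.card ≤ x.1.card := Finset.card_le_card hyx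
    omega
  · intro z _ hzx
    have : ¬ x.1 ⊆ z.1 := by
      intro h
      exact hzx (Subtype.ext (hfacet z.1 z.2 h))
    rw [Mmat, if_neg this, zero_mul, zero_mul]
  · intro h
    exact absurd (Finset.mem_univ x) h
end
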